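/- Let (ℓ_n)_{n≥0} be positive natural numbers, set ℓ_{-1} = ℓ_{-2} = 0 and f(n) = Σ_{j=0}^n ℓ_j. If an infinite p-adic MCF satisfies h_{n+1} ≥ ℓ_n and k_{n+1} ≥ ℓ_n + ℓ_{n-1} for all n ≥ 0 (where h_n = ν_p(b_n/a_n) and k_n = ν_p(1/a_n)), then min{ν_p(V_n^α), ν_p(V_n^β)} ≥ f(n) for every n ∈ ℕ. -/

import Mathlib

/-!
Both `V_n^α` and `V_n^β` satisfy `V_n = -(α_n - a_n) V_{n-1} - (β_n - b_n) V_{n-2}`, since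
`α_n - a_n = β_{n+1}/α_{n+1}` and `β_n - b_n = 1/α_{n+1}`.
As `|α_{n+1} - a_{n+1}|_p < 1 < |α_{n+1}|_p`, we get `ν(β_n - b_n) = k_{n+1} ≥ ℓ_n + ℓ_{n-1}`,
and as `|β_{n+1}|_p ≤ max(|b_{n+1}|_p, 1)`, also
`ν(α_n - a_n) ≥ ℓ_n`. The ultrametric inequality then propagates `ν(V_n) ≥ f(n)` by two-step
induction, because `ℓ_n + f(n-1) = ℓ_n + ℓ_{n-1} + f(n-2) = f(n)`.
-/

/-- The Browkin `s`-function on `ℚ_p`: sends `α` to the truncation of its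
`p`-adic expansion (digits in `(-p/2, p/2)`) to non-positive powers of `p`.
It is characterized by: `s α ∈ ℤ[1/p]`, `|s α|_∞ < p/2`, and `|α - s α|_p < 1`. -/
structure BrowkinS (p : ℕ) [Fact (Nat.Prime p)] where
  s : ℚ_[p] → ℚ
  s_int : ∀ x, ∃ (z : ℤ) (k : ℕ), s x = (z : ℚ) / (p : ℚ) ^ k
  s_bound : ∀ x, |s x| < (p : ℚ) / 2
  s_close : ∀ x, ‖x - (s x : ℚ_[p])‖ < 1

/-- An infinite `p`-adic multidimensional continued fraction (dimension 2),
produced by the `p`-adic Jacobi–Perron algorithm: `al 0 = α`, `be 0 = β`,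
`a_n = s(α_n)`, `b_n = s(β_n)`, `α_{n+1} = 1/(β_n - b_n)`,
`β_{n+1} = (α_n - a_n)/(β_n - b_n)`, and the algorithm never stops. -/
structure PMCF (p : ℕ) [Fact (Nat.Prime p)] where
  s : ℚ_[p] → ℚ
  s_int : ∀ x, ∃ (z : ℤ) (k : ℕ), s x = (z : ℚ) / (p : ℚ) ^ k
  s_bound : ∀ x, |s x| < (p : ℚ) / 2
  s_close : ∀ x, ‖x - (s x : ℚ_[p])‖ < 1
  al : ℕ → ℚ_[p]
  be : ℕ → ℚ_[p]
  ne : ∀ n, be n - (s (be n) : ℚ_[p]) ≠ 0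
  ral : ∀ n, al (n + 1) = (be n - (s (be n) : ℚ_[p]))⁻¹
  rbe : ∀ n, be (n + 1) = (al n - (s (al n) : ℚ_[p])) * (be n - (s (be n) : ℚ_[p]))⁻¹

namespace PMCF

variable {p : ℕ} [Fact (Nat.Prime p)]

/-- Partial quotients `a_n = s(α_n)`. -/
def a (m : PMCF p) (n : ℕ) : ℚ := m.s (m.al n)

/-- Partial quotients `b_n = s(β_n)`. -/
def b (m : PMCF p) (n : ℕ) : ℚ := m.s (m.be n)

/-- Numerators `A`: indices shifted by `2`, so `A (n+2)` is the paper's `A_n`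
(`A_{-2} = 0`, `A_{-1} = 1`, `A_0 = a_0`). -/
def A (m : PMCF p) : ℕ → ℚ
  | 0 => 0
  | 1 => 1
  | 2 => a m 0
  | n + 3 => a m (n + 1) * A m (n + 2) + b m (n + 1) * A m (n + 1) + A m n

/-- Numerators `B` (shifted by `2`): `B_{-2} = 1`, `B_{-1} = 0`, `B_0 = b_0`. -/
def B (m : PMCF p) : ℕ → ℚ
  | 0 => 1
  | 1 => 0
  | 2 => b m 0
  | n + 3 => a m (n + 1) * B m (n + 2) + b m (n + 1) * B m (n + 1) + B m n

/-- Denominators `C` (shifted by `2`): `C_{-2} = 0`, `C_{-1} = 0`, `C_0 = 1`. -/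
def C (m : PMCF p) : ℕ → ℚ
  | 0 => 0
  | 1 => 0
  | 2 => 1
  | n + 3 => a m (n + 1) * C m (n + 2) + b m (n + 1) * C m (n + 1) + C m n

/-- `K_n = k_1 + ⋯ + k_n` where `k_i = ν_p(1/a_i)`. -/
def K (m : PMCF p) (n : ℕ) : ℤ := -∑ i ∈ Finset.Icc 1 n, padicValRat p (a m i)

/-- `k_n = ν_p(1/a_n)`. -/
def kk (m : PMCF p) (n : ℕ) : ℤ := -padicValRat p (a m n)

/-- `V_n^α = C_n α - A_n` (paper indexing). -/
noncomputable def Va (m : PMCF p) (n : ℕ) : ℚ_[p] :=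
  ((C m (n + 2) : ℚ) : ℚ_[p]) * m.al 0 - ((A m (n + 2) : ℚ) : ℚ_[p])

/-- `V_n^β = C_n β - B_n` (paper indexing). -/
noncomputable def Vb (m : PMCF p) (n : ℕ) : ℚ_[p] :=
  ((C m (n + 2) : ℚ) : ℚ_[p]) * m.be 0 - ((B m (n + 2) : ℚ) : ℚ_[p])

end PMCF

theorem norm_le_of_three_term_recurrence {R : Type*} [SeminormedRing R] [IsUltrametricDist R]
    {W c d : ℕ → R} {r : ℕ → ℝ} (hrec : ∀ n, W (n + 2) + c n * W (n + 1) + d n * W n = 0)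
    (hc : ∀ n, ‖c n‖ * r (n + 1) ≤ r (n + 2)) (hd : ∀ n, ‖d n‖ * r n ≤ r (n + 2))
    (h0 : ‖W 0‖ ≤ r 0) (h1 : ‖W 1‖ ≤ r 1) : ∀ n, ‖W n‖ ≤ r n := by
  intro n
  induction n using Nat.twoStepInduction with
  | zero => exact h0
  | one => exact h1
  | more n ih0 ih1 =>
    have hrec' := hrec n
    rw [add_assoc] at hrec'
    rw [eq_neg_of_add_eq_zero_left hrec', norm_neg]
    refine (IsUltrametricDist.norm_add_le_max _ _).trans (max_le ?_ ?_)
    · exact (norm_mul_le _ _).trans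
        ((mul_le_mul_of_nonneg_left ih1 (norm_nonneg _)).trans (hc n))
    · exact (norm_mul_le _ _).trans
        ((mul_le_mul_of_nonneg_left ih0 (norm_nonneg _)).trans (hd n))

namespace Padic

variable {p : ℕ} [Fact p.Prime]

theorem norm_ratCast_of_ne_zero {q : ℚ} (hq : q ≠ 0) :
    ‖(q : ℚ_[p])‖ = (p : ℝ) ^ (-padicValRat p q) := by
  rw [norm_eq_zpow_neg_valuation (by exact_mod_cast hq), valuation_ratCast]

/-- An element of `ℤ[1/p] ∩ pℤ_p` lies in `pℤ`, hence is `0` or has absolute value at least `p`. -/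
theorem one_le_norm_of_abs_lt {q : ℚ} {z : ℤ} {k : ℕ} (hq : q = z / (p : ℚ) ^ k)
    (hq0 : q ≠ 0) (hlt : |q| < p) : 1 ≤ ‖(q : ℚ_[p])‖ := by
  by_contra! hnorm
  have hpk : (0 : ℚ) < (p : ℚ) ^ k := pow_pos (by exact_mod_cast (Fact.out : p.Prime).pos) k
  have hzq : (z : ℚ) = q * (p : ℚ) ^ k := by rw [hq, div_mul_cancel₀ _ hpk.ne']
  have hdvd : ((p : ℤ) ^ (k + 1)) ∣ z := by
    rw [← norm_int_le_pow_iff_dvd]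
    have hq1 : ‖(q : ℚ_[p])‖ ≤ (p : ℝ) ^ (-1 : ℤ) := by
      simpa using (norm_lt_pow_iff_norm_le_pow_sub_one (q : ℚ_[p]) 0).mp (by simpa using hnorm)
    calc ‖(z : ℚ_[p])‖ = ‖(q : ℚ_[p])‖ * (p : ℝ) ^ (-k : ℤ) := by
          rw [← norm_p_pow, ← norm_mul]; congr 1; exact_mod_cast hzq
      _ ≤ (p : ℝ) ^ (-1 : ℤ) * (p : ℝ) ^ (-k : ℤ) := by gcongr
      _ = (p : ℝ) ^ (-(k + 1 : ℕ) : ℤ) := by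
          rw [← zpow_add₀ (by simp [(Fact.out : p.Prime).ne_zero])]
          push_cast
          ring_nf
  have hz0 : z ≠ 0 := by rintro rfl; exact hq0 (by simpa using hq)
  have : ((p : ℤ) ^ (k + 1) : ℤ) ≤ |z| := Int.le_of_dvd (abs_pos.mpr hz0) ((dvd_abs _ _).mpr hdvd)
  have : (p : ℚ) * (p : ℚ) ^ k ≤ |q| * (p : ℚ) ^ k := by
    rw [hq, abs_div, abs_of_pos hpk, div_mul_cancel₀ _ hpk.ne', ← pow_succ']
    exact_mod_cast this
  nlinarith

end Padic

/-- `f(n - 2)` in the paper's notation, with `f(-2) = f(-1) = 0`. -/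
def shiftedPartialSum (l : ℕ → ℕ) (n : ℕ) : ℤ := ∑ j ∈ Finset.range (n - 1), (l j : ℤ)

theorem shiftedPartialSum_add_two (l : ℕ → ℕ) (n : ℕ) :
    shiftedPartialSum l (n + 2) = shiftedPartialSum l (n + 1) + l n := by
  simp [shiftedPartialSum, Finset.sum_range_succ]

theorem shiftedPartialSum_zero (l : ℕ → ℕ) : shiftedPartialSum l 0 = 0 := by
  simp [shiftedPartialSum]

theorem shiftedPartialSum_two (l : ℕ → ℕ) : shiftedPartialSum l 2 = l 0 := by
  simp [shiftedPartialSum]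

theorem shiftedPartialSum_mono (l : ℕ → ℕ) : Monotone (shiftedPartialSum l) := fun _ _ hmn =>
  Finset.sum_le_sum_of_subset_of_nonneg (Finset.range_mono (Nat.sub_le_sub_right hmn 1))
    fun _ _ _ => Nat.cast_nonneg _

namespace PMCF

variable {p : ℕ} [Fact p.Prime] (m : PMCF p) {l : ℕ → ℕ}

theorem be_sub_b_ne_zero (n : ℕ) : m.be n - m.b n ≠ 0 := m.ne n

theorem al_succ (n : ℕ) : m.al (n + 1) = (m.be n - m.b n)⁻¹ := m.ral n

theorem be_succ (n : ℕ) : m.be (n + 1) = (m.al n - m.a n) * (m.be n - m.b n)⁻¹ := m.rbe n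

theorem one_le_norm_s {x : ℚ_[p]} (hx : m.s x ≠ 0) : 1 ≤ ‖(m.s x : ℚ_[p])‖ := by
  obtain ⟨z, k, hzk⟩ := m.s_int x
  have hp : (0 : ℚ) < p := by exact_mod_cast (Fact.out : p.Prime).pos
  exact Padic.one_le_norm_of_abs_lt hzk hx ((m.s_bound x).trans (by linarith))

theorem norm_le_zpow_padicValRat_s (x : ℚ_[p]) : ‖x‖ ≤ (p : ℝ) ^ (-padicValRat p (m.s x)) := by
  by_cases hx : m.s x = 0
  · simpa [hx] using (m.s_close x).le
  · rw [← Padic.norm_ratCast_of_ne_zero hx]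
    calc ‖x‖ = ‖(m.s x : ℚ_[p]) + (x - m.s x)‖ := by rw [add_sub_cancel]
      _ ≤ max ‖(m.s x : ℚ_[p])‖ ‖x - m.s x‖ := IsUltrametricDist.norm_add_le_max _ _
      _ = ‖(m.s x : ℚ_[p])‖ := max_eq_left ((m.s_close x).le.trans (m.one_le_norm_s hx))

theorem norm_al_succ (n : ℕ) : ‖m.al (n + 1)‖ = ‖m.be n - m.b n‖⁻¹ := by
  rw [al_succ, norm_inv]

theorem one_lt_norm_al_succ (n : ℕ) : 1 < ‖m.al (n + 1)‖ := by
  rw [norm_al_succ]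
  exact (one_lt_inv₀ (norm_pos_iff.mpr (m.be_sub_b_ne_zero n))).mpr (m.s_close _)

theorem norm_be_sub_b (n : ℕ) :
    ‖m.be n - m.b n‖ = (p : ℝ) ^ padicValRat p (m.a (n + 1)) := by
  have hnorm : ‖(m.a (n + 1) : ℚ_[p])‖ = ‖m.al (n + 1)‖ :=
    (Padic.norm_eq_of_norm_sub_lt_left
      ((m.s_close _).trans (m.one_lt_norm_al_succ n))).symm
  have ha : m.a (n + 1) ≠ 0 := by
    rintro ha
    have := m.one_lt_norm_al_succ n
    rw [← hnorm, ha, Rat.cast_zero, norm_zero] at this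
    linarith
  rw [← inv_inv ‖m.be n - m.b n‖, ← norm_al_succ, ← hnorm,
    Padic.norm_ratCast_of_ne_zero ha, zpow_neg, inv_inv]

theorem al_sub_a (n : ℕ) : m.al n - m.a n = m.be (n + 1) * (m.be n - m.b n) := by
  rw [be_succ, inv_mul_cancel_right₀ (m.be_sub_b_ne_zero n)]

theorem norm_al_sub_a_le (n : ℕ) : ‖m.al n - m.a n‖ ≤
    (p : ℝ) ^ (padicValRat p (m.a (n + 1)) - padicValRat p (m.b (n + 1))) := by
  rw [al_sub_a, norm_mul, norm_be_sub_b, sub_eq_neg_add,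
    zpow_add₀ (by exact_mod_cast (Fact.out : p.Prime).ne_zero)]
  gcongr
  exact m.norm_le_zpow_padicValRat_s _

theorem jacobiPerron_recurrence {W : ℕ → ℚ_[p]}
    (hW : ∀ n, W (n + 3) = m.a (n + 1) * W (n + 2) + m.b (n + 1) * W (n + 1) + W n)
    (h0 : W 2 + (m.al 0 - m.a 0) * W 1 + (m.be 0 - m.b 0) * W 0 = 0) :
    ∀ n, W (n + 2) + (m.al n - m.a n) * W (n + 1) + (m.be n - m.b n) * W n = 0 := by
  intro n
  induction n with
  | zero => exact h0
  | succ n ih =>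
    have hd := m.be_sub_b_ne_zero n
    -- the relation at `n + 1` is the one at `n` divided by `β_n - b_n`
    rw [hW, al_succ, be_succ]
    field_simp
    linear_combination ih

/-- `h_{n+1} ≥ ℓ_n` (read as true when `b_{n+1} = 0`) and `k_{n+1} ≥ ℓ_n + ℓ_{n-1}`,
with `ℓ_{-1} = 0`. -/
structure ValuationBounds (l : ℕ → ℕ) : Prop where
  h_succ : ∀ n, m.b (n + 1) = 0 ∨
    (l n : ℤ) ≤ padicValRat p (m.b (n + 1)) - padicValRat p (m.a (n + 1))
  k_one : (l 0 : ℤ) ≤ -padicValRat p (m.a 1)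
  k_succ_succ : ∀ n, (l (n + 1) : ℤ) + (l n : ℤ) ≤ -padicValRat p (m.a (n + 2))

theorem padicValRat_a_succ_le (hl : m.ValuationBounds l) (n : ℕ) :
    padicValRat p (m.a (n + 1)) ≤ shiftedPartialSum l n - shiftedPartialSum l (n + 2) := by
  rcases n with _ | n
  · rw [zero_add, shiftedPartialSum_zero, shiftedPartialSum_two]
    linarith [hl.k_one]
  · rw [shiftedPartialSum_add_two, shiftedPartialSum_add_two]
    linarith [hl.k_succ_succ n]

theorem norm_be_sub_b_mul_le (hl : m.ValuationBounds l) (n : ℕ) :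
    ‖m.be n - m.b n‖ * (p : ℝ) ^ (-shiftedPartialSum l n) ≤
      (p : ℝ) ^ (-shiftedPartialSum l (n + 2)) := by
  have hp : (1 : ℝ) ≤ p := by exact_mod_cast (Fact.out : p.Prime).one_le
  rw [norm_be_sub_b, ← zpow_add₀ (by positivity)]
  exact zpow_le_zpow_right₀ hp (by linarith [m.padicValRat_a_succ_le hl n])

theorem padicValRat_a_sub_b_le (hl : m.ValuationBounds l) (n : ℕ) :
    padicValRat p (m.a (n + 1)) - padicValRat p (m.b (n + 1)) ≤ -(l n : ℤ) := by
  rcases hl.h_succ n with hb | hb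
  · have ha := m.padicValRat_a_succ_le hl n
    have hmono := shiftedPartialSum_mono l n.le_succ
    rw [shiftedPartialSum_add_two] at ha
    rw [hb, padicValRat.zero, sub_zero]
    linarith
  · linarith

theorem norm_al_sub_a_mul_le (hl : m.ValuationBounds l) (n : ℕ) :
    ‖m.al n - m.a n‖ * (p : ℝ) ^ (-shiftedPartialSum l (n + 1)) ≤
      (p : ℝ) ^ (-shiftedPartialSum l (n + 2)) := by
  have hp : (1 : ℝ) ≤ p := by exact_mod_cast (Fact.out : p.Prime).one_le
  calc ‖m.al n - m.a n‖ * (p : ℝ) ^ (-shiftedPartialSum l (n + 1))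
      ≤ (p : ℝ) ^ (-(l n : ℤ)) * (p : ℝ) ^ (-shiftedPartialSum l (n + 1)) := by
        gcongr
        exact (m.norm_al_sub_a_le n).trans
          (zpow_le_zpow_right₀ hp (m.padicValRat_a_sub_b_le hl n))
    _ = (p : ℝ) ^ (-shiftedPartialSum l (n + 2)) := by
        rw [← zpow_add₀ (by positivity), shiftedPartialSum_add_two]
        ring_nf

theorem norm_le_of_jacobiPerron_recurrence (hl : m.ValuationBounds l) {W : ℕ → ℚ_[p]}
    (hW : ∀ n, W (n + 3) = m.a (n + 1) * W (n + 2) + m.b (n + 1) * W (n + 1) + W n)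
    (h0 : W 2 + (m.al 0 - m.a 0) * W 1 + (m.be 0 - m.b 0) * W 0 = 0)
    (hW0 : ‖W 0‖ ≤ 1) (hW1 : ‖W 1‖ ≤ 1) (n : ℕ) :
    ‖W n‖ ≤ (p : ℝ) ^ (-shiftedPartialSum l n) :=
  norm_le_of_three_term_recurrence (m.jacobiPerron_recurrence hW h0)
    (m.norm_al_sub_a_mul_le hl) (m.norm_be_sub_b_mul_le hl)
    (by simpa [shiftedPartialSum] using hW0) (by simpa [shiftedPartialSum] using hW1) n

end PMCF

theorem pmcf_improved_V_lower_bound_general (p : ℕ) [Fact (Nat.Prime p)]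
    (m : PMCF p) (l : ℕ → ℕ)
    (hh : ∀ n, PMCF.b m (n + 1) = 0 ∨
      (l n : ℤ) ≤ padicValRat p (PMCF.b m (n + 1)) - padicValRat p (PMCF.a m (n + 1)))
    (hk0 : (l 0 : ℤ) ≤ -padicValRat p (PMCF.a m 1))
    (hk : ∀ n, (l (n + 1) : ℤ) + (l n : ℤ) ≤ -padicValRat p (PMCF.a m (n + 2))) :
    ∀ n, max ‖PMCF.Va m n‖ ‖PMCF.Vb m n‖ ≤
      (p : ℝ) ^ (-(∑ j ∈ Finset.range (n + 1), (l j : ℤ))) := by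
  intro n
  have hl : m.ValuationBounds l := ⟨hh, hk0, hk⟩
  have hVa := m.norm_le_of_jacobiPerron_recurrence hl
    (W := fun k => (m.C k : ℚ_[p]) * m.al 0 - m.A k)
    (fun k => by simp only [PMCF.C, PMCF.A]; push_cast; ring)
    (by simp [PMCF.C, PMCF.A]) (by simp [PMCF.C, PMCF.A]) (by simp [PMCF.C, PMCF.A]) (n + 2)
  have hVb := m.norm_le_of_jacobiPerron_recurrence hl
    (W := fun k => (m.C k : ℚ_[p]) * m.be 0 - m.B k)
    (fun k => by simp only [PMCF.C, PMCF.B]; push_cast; ring)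
    (by simp [PMCF.C, PMCF.B]) (by simp [PMCF.C, PMCF.B]) (by simp [PMCF.C, PMCF.B]) (n + 2)
  exact max_le hVa hVb

/-- If `h_{n+1} ≥ ℓ_n` and `k_{n+1} ≥ ℓ_n + ℓ_{n-1}` (with `ℓ_{-1} = 0` and
positive `ℓ_n`, and the convention that `h_n = ∞` when `b_n = 0`), then
`min{ν_p(V_n^α), ν_p(V_n^β)} ≥ f(n) = Σ_{j=0}^n ℓ_j` (stated via the norm). -/
theorem pmcf_improved_V_lower_bound (p : ℕ) [Fact (Nat.Prime p)] (hp : Odd p)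
    (m : PMCF p) (l : ℕ → ℕ) (hl : ∀ n, 0 < l n)
    (hh : ∀ n, PMCF.b m (n + 1) = 0 ∨
      (l n : ℤ) ≤ padicValRat p (PMCF.b m (n + 1)) - padicValRat p (PMCF.a m (n + 1)))
    (hk0 : (l 0 : ℤ) ≤ -padicValRat p (PMCF.a m 1))
    (hk : ∀ n, (l (n + 1) : ℤ) + (l n : ℤ) ≤ -padicValRat p (PMCF.a m (n + 2))) :
    ∀ n, max ‖PMCF.Va m n‖ ‖PMCF.Vb m n‖ ≤
      (p : ℝ) ^ (-(∑ j ∈ Finset.range (n + 1), (l j : ℤ))) :=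
  pmcf_improved_V_lower_bound_general p m l hh hk0 hk
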